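/- If a finite simple graph G has a unique minimal generating set (𝒢(G) = {L} for some L), then the nim-number of the achievement game is nim(GEN(G)) = |V| mod 2. -/

import Mathlib

open SimpleGraph

variable {V : Type*}

/-- `w` lies on a geodesic (shortest path) between `u` and `v` in `G`. -/
def OnGeodesic (G : SimpleGraph V) (u v w : V) : Prop :=
  ∃ p : G.Walk u v, p.IsPath ∧ p.length = G.dist u v ∧ w ∈ p.support

/-- A set of vertices is geodetically convex if it contains every vertex lying on a
geodesic between two of its elements. -/
def GeoConvex (G : SimpleGraph V) (S : Set V) : Prop :=
  ∀ ⦃u⦄, u ∈ S → ∀ ⦃v⦄, v ∈ S → ∀ ⦃w⦄, OnGeodesic G u v w → w ∈ S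

/-- The geodetic convex hull of a set of vertices: the smallest geodetically convex
set containing it. -/
def geoHull (G : SimpleGraph V) (S : Set V) : Set V :=
  ⋂₀ {K : Set V | S ⊆ K ∧ GeoConvex G K}

/-- A set of vertices is generating if its convex hull is the whole vertex set. -/
def GeoGenerates (G : SimpleGraph V) (S : Set V) : Prop :=
  geoHull G S = Set.univ

/-- A maximal nongenerating set: a nongenerating set not properly contained in any
nongenerating set.  The family of these is `𝒩(G)`. -/
def MaxNongen (G : SimpleGraph V) (N : Set V) : Prop :=
  ¬ GeoGenerates G N ∧ ∀ M : Set V, ¬ GeoGenerates G M → N ⊆ M → N = M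

/-- The Frattini subset `Φ(G)`: the intersection of all maximal nongenerating sets. -/
def geoFrattini (G : SimpleGraph V) : Set V :=
  ⋂₀ {N : Set V | MaxNongen G N}

/-- A vertex is simplicial if its neighbors induce a complete graph. -/
def Simplicial (G : SimpleGraph V) (v : V) : Prop :=
  ∀ ⦃u w : V⦄, G.Adj v u → G.Adj v w → u ≠ w → G.Adj u w

/-- A minimal generating set: a generating set no proper subset of which generates.
The family of these is `𝒢(G)`. -/
def MinGen (G : SimpleGraph V) (L : Set V) : Prop :=
  GeoGenerates G L ∧ ∀ M : Set V, GeoGenerates G M → M ⊆ L → M = L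

/-- The minimum excludant of a set of natural numbers. -/
noncomputable def natMex (A : Set ℕ) : ℕ := sInf {n : ℕ | n ∉ A}

variable [Fintype V] [DecidableEq V]

/-- Nim-value of a position `P` of the avoidance game `DNG(G)`, computed with fuel:
the options of a position `P` are the sets `insert v P` with `v ∉ P` that are
nongenerating, and the value is the minimum excludant of the values of the options.
The fuel (first argument) tracks the number of unselected vertices, so it never
runs out along actual plays. -/
noncomputable def dngAux (G : SimpleGraph V) : ℕ → Finset V → ℕ
  | 0, _ => 0
  | k + 1, P => natMex {m : ℕ | ∃ v : V, v ∉ P ∧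
      ¬ GeoGenerates G (↑(insert v P) : Set V) ∧ m = dngAux G k (insert v P)}

/-- The nim-number of the avoidance game `DNG(G)`: the nim-value of the starting
position `∅`. -/
noncomputable def dngNim (G : SimpleGraph V) : ℕ := dngAux G (Fintype.card V) ∅

open scoped Classical in
/-- Nim-value of a position `P` of the achievement game `GEN(G)`, computed with fuel:
generating positions are terminal (value `0 = mex ∅`), and the options of a
nongenerating position `P` are all sets `insert v P` with `v ∉ P`. -/
noncomputable def genAux (G : SimpleGraph V) : ℕ → Finset V → ℕ
  | 0, _ => 0
  | k + 1, P =>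
      if GeoGenerates G (↑P : Set V) then 0
      else natMex {m : ℕ | ∃ v : V, v ∉ P ∧ m = genAux G k (insert v P)}

/-- The nim-number of the achievement game `GEN(G)`: the nim-value of the starting
position `∅`. -/
noncomputable def genNim (G : SimpleGraph V) : ℕ := genAux G (Fintype.card V) ∅

section Aux
open scoped Classical

variable {V : Type*}

lemma subset_geoHull (G : SimpleGraph V) (S : Set V) : S ⊆ geoHull G S :=
  fun _ hx => Set.mem_sInter.mpr fun _ hK => hK.1 hx

lemma geoHull_mono (G : SimpleGraph V) {S T : Set V} (h : S ⊆ T) :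
    geoHull G S ⊆ geoHull G T := fun x hx =>
  Set.mem_sInter.mpr fun K hK => Set.mem_sInter.mp hx K ⟨h.trans hK.1, hK.2⟩

lemma geoGenerates_mono (G : SimpleGraph V) {S T : Set V}
    (hS : GeoGenerates G S) (h : S ⊆ T) : GeoGenerates G T :=
  Set.eq_univ_of_univ_subset (hS ▸ geoHull_mono G h)

lemma geoHull_subset_of_convex (G : SimpleGraph V) {S K : Set V} (h1 : S ⊆ K)
    (h2 : GeoConvex G K) : geoHull G S ⊆ K :=
  Set.sInter_subset_of_mem ⟨h1, h2⟩

lemma geoConvex_empty (G : SimpleGraph V) : GeoConvex G (∅ : Set V) :=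
  fun u hu => absurd hu (Set.notMem_empty u)

lemma geoConvex_singleton (G : SimpleGraph V) (v : V) : GeoConvex G {v} := by
  intro u hu u' hu' w hw
  rw [Set.mem_singleton_iff] at hu hu'
  subst hu; subst hu'
  obtain ⟨p, hp, hlen, hsup⟩ := hw
  rw [SimpleGraph.dist_self] at hlen
  cases p with
  | nil => simpa using hsup
  | cons h q => simp at hlen

lemma exists_minGen_subset [Fintype V] (G : SimpleGraph V) :
    ∀ n (S : Set V), S.ncard ≤ n → GeoGenerates G S → ∃ M, M ⊆ S ∧ MinGen G M := by
  intro n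
  induction n with
  | zero =>
    intro S hc hS
    refine ⟨S, subset_rfl, hS, fun M hM hMS => ?_⟩
    have hS0 : S = ∅ := Set.ncard_eq_zero (Set.toFinite S) |>.mp (Nat.le_zero.mp hc)
    subst hS0
    exact Set.subset_empty_iff.mp hMS
  | succ n ih =>
    intro S hc hS
    by_cases h : MinGen G S
    · exact ⟨S, subset_rfl, h⟩
    · unfold MinGen at h
      push_neg at h
      obtain ⟨M, hM, hMS, hne⟩ := h hS
      have hlt : M.ncard < S.ncard :=
        Set.ncard_lt_ncard (ssubset_of_subset_of_ne hMS hne) (Set.toFinite S)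
      obtain ⟨M', hM'M, hmin⟩ := ih M (by omega) hM
      exact ⟨M', hM'M.trans hMS, hmin⟩

lemma geoGenerates_iff_subset [Fintype V] (G : SimpleGraph V) (L : Set V)
    (hL : {M : Set V | MinGen G M} = {L}) (S : Set V) :
    GeoGenerates G S ↔ L ⊆ S := by
  have hMinL : MinGen G L := by
    have : L ∈ ({L} : Set (Set V)) := rfl
    rw [← hL] at this; exact this
  constructor
  · intro hS
    obtain ⟨M, hMS, hmin⟩ := exists_minGen_subset G S.ncard S le_rfl hS
    have : M ∈ ({L} : Set (Set V)) := by rw [← hL]; exact hmin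
    rw [Set.mem_singleton_iff] at this
    exact this ▸ hMS
  · exact fun h => geoGenerates_mono G hMinL.1 h

end Aux
section Aux2

lemma natMex_eq (A : Set ℕ) (m : ℕ) (h1 : m ∉ A) (h2 : ∀ j < m, j ∈ A) :
    natMex A = m := by
  have hmem : m ∈ {n : ℕ | n ∉ A} := h1
  refine le_antisymm (Nat.sInf_le hmem) ?_
  by_contra hlt
  push_neg at hlt
  have := Nat.sInf_mem (⟨m, hmem⟩ : {n : ℕ | n ∉ A}.Nonempty)
  exact this (h2 _ hlt)

variable {V : Type*} [Fintype V] [DecidableEq V]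

lemma genAux_eq (G : SimpleGraph V) (LF : Finset V)
    (hgen : ∀ S : Set V, GeoGenerates G S ↔ ↑LF ⊆ S) :
    ∀ k (P : Finset V), P.card + k = Fintype.card V →
      genAux G k P = if LF ⊆ P then 0
        else if k % 2 = 1 then 1 else if (LF \ P).card = 1 then 2 else 0 := by
  intro k
  induction k with
  | zero =>
    intro P hP
    have hPuniv : P = Finset.univ := Finset.eq_univ_of_card P (by omega)
    have : LF ⊆ P := hPuniv ▸ Finset.subset_univ LF
    rw [if_pos this]
    rfl
  | succ k ih =>
    intro P hP
    have hgenP : GeoGenerates G (↑P : Set V) ↔ LF ⊆ P := by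
      rw [hgen]; exact Finset.coe_subset
    by_cases hsub : LF ⊆ P
    · rw [if_pos hsub]
      simp only [genAux, if_pos (hgenP.mpr hsub)]
    · rw [if_neg hsub]
      simp only [genAux, if_neg (fun h => hsub (hgenP.mp h))]
      -- nongenerating case
      set A : Set ℕ := {m : ℕ | ∃ v : V, v ∉ P ∧ m = genAux G k (insert v P)} with hA
      have hne : (LF \ P).Nonempty := Finset.sdiff_nonempty.mpr hsub
      have hℓpos : 0 < (LF \ P).card := Finset.card_pos.mpr hne
      have hℓle : (LF \ P).card ≤ k + 1 := by
        have h1 : LF \ P ⊆ Pᶜ := by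
          intro x hx
          rw [Finset.mem_compl]
          exact (Finset.mem_sdiff.mp hx).2
        have := Finset.card_le_card h1
        rw [Finset.card_compl] at this
        omega
      have hdiff : ∀ v : V, LF \ insert v P = (LF \ P).erase v := by
        intro v; ext x
        simp only [Finset.mem_sdiff, Finset.mem_insert, Finset.mem_erase]
        tauto
      have hval : ∀ v : V, v ∉ P → genAux G k (insert v P) =
          if LF ⊆ insert v P then 0
          else if k % 2 = 1 then 1
          else if ((LF \ P).erase v).card = 1 then 2 else 0 := by
        intro v hv
        rw [ih (insert v P) (by rw [Finset.card_insert_of_notMem hv]; omega), hdiff]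
      have hnot : ∀ v : V, ((LF \ P).erase v).Nonempty → ¬ LF ⊆ insert v P := by
        intro v ⟨x, hx⟩ hss
        obtain ⟨hxv, hxd⟩ := Finset.mem_erase.mp hx
        obtain ⟨hxL, hxP⟩ := Finset.mem_sdiff.mp hxd
        rcases Finset.mem_insert.mp (hss hxL) with h | h
        · exact hxv h
        · exact hxP h
      have hout : (LF \ P).card < k + 1 → ∃ v, v ∉ P ∧ v ∉ LF := by
        intro hlt
        by_contra hcon
        push_neg at hcon
        have hcc : Pᶜ ⊆ LF \ P := by
          intro x hx
          have hxP := Finset.mem_compl.mp hx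
          exact Finset.mem_sdiff.mpr ⟨hcon x hxP, hxP⟩
        have := Finset.card_le_card hcc
        rw [Finset.card_compl] at this
        omega
      -- a vertex completing LF when only one is missing
      have hone : (LF \ P).card = 1 → ∃ v, v ∉ P ∧ LF ⊆ insert v P := by
        intro h1
        obtain ⟨v, hv⟩ := Finset.card_eq_one.mp h1
        have hvmem : v ∈ LF \ P := hv ▸ Finset.mem_singleton_self v
        refine ⟨v, (Finset.mem_sdiff.mp hvmem).2, fun x hx => ?_⟩
        by_cases hxP : x ∈ P
        · exact Finset.mem_insert_of_mem hxP
        · have : x ∈ LF \ P := Finset.mem_sdiff.mpr ⟨hx, hxP⟩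
          rw [hv, Finset.mem_singleton] at this
          exact this ▸ Finset.mem_insert_self v P
      rcases Nat.mod_two_eq_zero_or_one k with hk | hk
      · -- k even, k+1 odd : value 1
        rw [if_pos (show (k + 1) % 2 = 1 by omega)]
        apply natMex_eq
        · rintro ⟨v, hv, hm⟩
          rw [hval v hv] at hm
          split_ifs at hm <;> omega
        · intro j hj
          have hj0 : j = 0 := by omega
          subst hj0
          -- find an option of value 0
          rcases eq_or_lt_of_le (show 1 ≤ (LF \ P).card from hℓpos) with h1 | h2
          · -- card = 1 : insert the missing vertex, generating
            obtain ⟨v, hvP, hvs⟩ := hone h1.symm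
            exact ⟨v, hvP, by rw [hval v hvP, if_pos hvs]⟩
          · rcases eq_or_lt_of_le (show 2 ≤ (LF \ P).card from h2) with h2' | h3
            · -- card = 2 : pick a vertex outside LF ∪ P
              have hlt : (LF \ P).card < k + 1 := by omega
              obtain ⟨v, hvP, hvL⟩ := hout hlt
              have herase : (LF \ P).erase v = LF \ P :=
                Finset.erase_eq_of_notMem (fun h => hvL (Finset.mem_sdiff.mp h).1)
              have hns : ¬ LF ⊆ insert v P := hnot v (by rw [herase]; exact hne)
              refine ⟨v, hvP, ?_⟩
              rw [hval v hvP, if_neg hns, if_neg (by omega), if_neg (by rw [herase]; omega)]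
            · -- card ≥ 3 : pick a vertex of LF \ P
              obtain ⟨v, hvmem⟩ := hne
              obtain ⟨hvL, hvP⟩ := Finset.mem_sdiff.mp hvmem
              have hcerase : ((LF \ P).erase v).card = (LF \ P).card - 1 :=
                Finset.card_erase_of_mem hvmem
              have hns : ¬ LF ⊆ insert v P :=
                hnot v (Finset.card_pos.mp (by omega))
              refine ⟨v, hvP, ?_⟩
              rw [hval v hvP, if_neg hns, if_neg (by omega), if_neg (by omega)]
      · -- k odd, k+1 even
        rw [if_neg (show ¬ (k + 1) % 2 = 1 by omega)]
        by_cases h1 : (LF \ P).card = 1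
        · rw [if_pos h1]
          apply natMex_eq
          · rintro ⟨v, hv, hm⟩
            rw [hval v hv] at hm
            split_ifs at hm <;> omega
          · intro j hj
            interval_cases j
            · obtain ⟨v, hvP, hvs⟩ := hone h1
              exact ⟨v, hvP, by rw [hval v hvP, if_pos hvs]⟩
            · have hlt : (LF \ P).card < k + 1 := by omega
              obtain ⟨v, hvP, hvL⟩ := hout hlt
              have herase : (LF \ P).erase v = LF \ P :=
                Finset.erase_eq_of_notMem (fun h => hvL (Finset.mem_sdiff.mp h).1)
              have hns : ¬ LF ⊆ insert v P := hnot v (by rw [herase]; exact hne)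
              refine ⟨v, hvP, ?_⟩
              rw [hval v hvP, if_neg hns, if_pos hk]
        · rw [if_neg h1]
          apply natMex_eq
          · rintro ⟨v, hv, hm⟩
            have hns : ¬ LF ⊆ insert v P := by
              apply hnot
              apply Finset.card_pos.mp
              have h2 : (LF \ P).card - 1 ≤ ((LF \ P).erase v).card :=
                Finset.pred_card_le_card_erase
              omega
            rw [hval v hv, if_neg hns, if_pos hk] at hm
            omega
          · intro j hj
            omega

end Aux2
/-- If `G` has a unique minimal generating set, then
`nim(GEN(G)) = |V| mod 2`. -/
theorem genNim_of_unique_minGen {V : Type*} [Fintype V] [DecidableEq V]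
    (G : SimpleGraph V) (L : Set V) (hL : {M : Set V | MinGen G M} = {L}) :
    genNim G = Fintype.card V % 2 := by
  classical
  have hgen' := geoGenerates_iff_subset G L hL
  obtain ⟨LF, hLF⟩ : ∃ LF : Finset V, (↑LF : Set V) = L :=
    ⟨(Set.toFinite L).toFinset, Set.Finite.coe_toFinset _⟩
  have hgen : ∀ S : Set V, GeoGenerates G S ↔ ↑LF ⊆ S := by
    intro S; rw [hgen' S, hLF]
  have hmain := genAux_eq G LF hgen (Fintype.card V) ∅ (by simp)
  rw [genNim, hmain]
  by_cases h0 : LF ⊆ ∅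
  · -- L = ∅, so ∅ generates, forcing V empty
    rw [if_pos h0]
    have hLe : LF = ∅ := Finset.subset_empty.mp h0
    have hgE : GeoGenerates G (∅ : Set V) := (hgen ∅).mpr (by simp [hLe])
    have hhull : geoHull G (∅ : Set V) ⊆ ∅ :=
      geoHull_subset_of_convex G subset_rfl (geoConvex_empty G)
    rw [hgE] at hhull
    have : IsEmpty V := by
      rw [← Set.univ_eq_empty_iff]
      exact Set.subset_empty_iff.mp hhull
    rw [Fintype.card_eq_zero]
  · rw [if_neg h0]
    rcases Nat.mod_two_eq_zero_or_one (Fintype.card V) with hpar | hpar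
    · rw [if_neg (by omega), hpar]
      rw [if_neg ?_]
      -- LF cannot be a singleton: a singleton is convex, so |V| = 1, odd
      rw [Finset.sdiff_empty]
      intro hcard
      obtain ⟨v, hv⟩ := Finset.card_eq_one.mp hcard
      have hgL : GeoGenerates G ({v} : Set V) := by
        refine (hgen _).mpr ?_
        rw [hv]; simp
      have hhull : geoHull G ({v} : Set V) ⊆ {v} :=
        geoHull_subset_of_convex G subset_rfl (geoConvex_singleton G v)
      rw [hgL] at hhull
      have hcard1 : Fintype.card V = 1 := by
        have : ∀ x : V, x = v := fun x => hhull (Set.mem_univ x)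
        rw [Fintype.card_eq_one_iff]
        exact ⟨v, this⟩
      omega
    · rw [if_pos hpar, hpar]
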